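/- The irreducible mass of a Kerr black hole, defined by 16π M_irr² = 8π M(M + √(M² − a²)), satisfies M_irr ≤ M for all 0 ≤ a ≤ M, with M_irr² = M²/2 when a = M; hence the maximum energy extractable by reducing spin to zero at fixed horizon area is M − M_irr = M(1 − 1/√2) ≈ 0.293 M for an extremal black hole. -/
import Mathlib


open Real

/-- The irreducible mass `M_irr` of a Kerr black hole, defined by
`16π M_irr² = 8π M (M + √(M² - a²))`, satisfies `M_irr ≤ M` for `0 ≤ a ≤ M`,
with `M_irr² = M²/2` when `a = M`; the maximum extractable rotational energy is
`M - M_irr = M (1 - 1/√2)` for an extremal black hole. -/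
theorem kerr_irreducible_mass
    (M a Mirr : ℝ) (hM : 0 < M) (ha0 : 0 ≤ a) (ha : a ≤ M) (hirr : 0 ≤ Mirr)
    (hdef : 16 * π * Mirr ^ 2 = 8 * π * M * (M + Real.sqrt (M ^ 2 - a ^ 2))) :
    Mirr ≤ M ∧
    (a = M → Mirr ^ 2 = M ^ 2 / 2) ∧
    (a = M → M - Mirr = M * (1 - 1 / Real.sqrt 2)) := by
  have hpi := Real.pi_pos
  have h2 : Mirr ^ 2 = M * (M + Real.sqrt (M ^ 2 - a ^ 2)) / 2 := by
    field_simp at hdef ⊢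
    nlinarith [hdef]
  have hsle : Real.sqrt (M ^ 2 - a ^ 2) ≤ M := by
    have h := Real.sqrt_le_sqrt (show M ^ 2 - a ^ 2 ≤ M ^ 2 by nlinarith)
    rwa [Real.sqrt_sq hM.le] at h
  have h1 : Mirr ≤ M := by
    nlinarith [Real.sqrt_nonneg (M ^ 2 - a ^ 2)]
  have hext : a = M → Mirr ^ 2 = M ^ 2 / 2 := by
    intro h; subst h
    simp at h2
    nlinarith [h2]
  refine ⟨h1, hext, ?_⟩
  intro h
  have h3 := hext h
  have hs2 : Real.sqrt 2 > 0 := by positivity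
  have : Mirr = M / Real.sqrt 2 := by
    have : Mirr ^ 2 = (M / Real.sqrt 2) ^ 2 := by
      rw [h3, div_pow, Real.sq_sqrt (by norm_num : (2:ℝ) ≥ 0)]
    nlinarith [this, div_pos hM hs2]
  rw [this]
  field_simp
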